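/- If R_c ∈ (1.42, 1.43) and x_c > 0 satisfy f_{R_c}(x_c) = 0 and f'_{R_c}(x_c) = 0, then for every R with 0 < R < R_c the cubic f_R has no roots in (0, ∞); consequently for such R the only equilibrium of the vegetation–water system with x₁ ≥ 0 is the bare state SN1 = (0, R). -/

import Mathlib

/-- Drift of the vegetation–water system with ρ = 1, K = 10, β = 3, x₀ = 1, α = 1, λ = 0.12. -/
noncomputable def bVW (R : ℝ) (p : ℝ × ℝ) : ℝ × ℝ :=
  (p.1 * (p.2 - p.1 / 10) - 3 * p.1 / (p.1 + 1),
   R - p.2 - 0.12 * p.1 * p.2)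

/-- The cubic whose positive roots give the nontrivial equilibria. -/
noncomputable def fR (R x : ℝ) : ℝ :=
  0.12 * x ^ 3 + 1.12 * x ^ 2 + (4.6 - 10 * R) * x + (30 - 10 * R)

/-!
At a double root `xc` of `f_{Rc}` the third root is `-(2 xc + 28/3)` (the roots sum to
`-1.12/0.12`), so `f_{Rc} ≥ 0` on `[0, ∞)` when `xc ≥ 0`. Since `f_R = f_{Rc} + 10 (Rc - R) (x + 1)`,
lowering `R` below `Rc` lifts the cubic strictly above zero there. A positive equilibrium of the
drift would give a positive root of `f_R`, so only the bare state survives.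
-/

lemma fR_hasDerivAt (R x : ℝ) :
    HasDerivAt (fR R) (0.36 * x ^ 2 + 2.24 * x + (4.6 - 10 * R)) x := by
  have h : HasDerivAt (fun x : ℝ =>
      0.12 * x ^ 3 + 1.12 * x ^ 2 + (4.6 - 10 * R) * x + (30 - 10 * R))
      (0.12 * (3 * x ^ 2) + 1.12 * (2 * x ^ 1) + (4.6 - 10 * R) * 1 + 0) x :=
    ((((hasDerivAt_pow 3 x).const_mul 0.12).add ((hasDerivAt_pow 2 x).const_mul 1.12)).add
      ((hasDerivAt_id x).const_mul (4.6 - 10 * R))).add (hasDerivAt_const x _)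
  exact h.congr_deriv (by ring)

lemma fR_eq_of_double_root {Rc xc : ℝ} (hroot : fR Rc xc = 0) (hderiv : deriv (fR Rc) xc = 0)
    (x : ℝ) : fR Rc x = 0.12 * (x - xc) ^ 2 * (x + 2 * xc + 28 / 3) := by
  rw [(fR_hasDerivAt Rc xc).deriv] at hderiv
  unfold fR at hroot ⊢
  linear_combination hroot + (x - xc) * hderiv

lemma fR_eq_fR_add (R Rc x : ℝ) : fR R x = fR Rc x + 10 * (Rc - R) * (x + 1) := by
  unfold fR
  ring

lemma fR_pos_of_double_root {R Rc xc x : ℝ} (hxc : 0 ≤ xc) (hroot : fR Rc xc = 0)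
    (hderiv : deriv (fR Rc) xc = 0) (hR : R < Rc) (hx : 0 ≤ x) : 0 < fR R x := by
  rw [fR_eq_fR_add R Rc, fR_eq_of_double_root hroot hderiv]
  have hgap : 0 < 10 * (Rc - R) * (x + 1) := by
    have := sub_pos.mpr hR
    positivity
  have hcubic : 0 ≤ 0.12 * (x - xc) ^ 2 * (x + 2 * xc + 28 / 3) := by positivity
  linarith

lemma fR_eq_zero_of_bVW_eq_zero {R : ℝ} {p : ℝ × ℝ} (hp : 0 < p.1) (h : bVW R p = (0, 0)) :
    fR R p.1 = 0 := by
  obtain ⟨x, y⟩ := p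
  simp only [bVW, Prod.mk.injEq] at h hp ⊢
  obtain ⟨hvegetation, hwater⟩ := h
  have hgrowth : (y - x / 10) * (x + 1) = 3 := by
    have hx1 : x + 1 ≠ 0 := by positivity
    have hfactor : x * ((y - x / 10) * (x + 1) - 3) = (x + 1) * 0 := by
      rw [← hvegetation]
      field_simp
    rw [mul_zero, mul_eq_zero, sub_eq_zero] at hfactor
    exact hfactor.resolve_left hp.ne'
  unfold fR
  linear_combination (-10 * (x + 1)) * hwater + (-10 - 1.2 * x) * hgrowth

lemma bVW_zeros_eq_singleton {R : ℝ} (h : ∀ x : ℝ, 0 < x → fR R x ≠ 0) :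
    {p : ℝ × ℝ | 0 ≤ p.1 ∧ bVW R p = (0, 0)} = {((0 : ℝ), R)} := by
  ext ⟨x, y⟩
  simp only [Set.mem_ofPred_eq, Set.mem_singleton_iff]
  constructor
  · rintro ⟨hx, hzero⟩
    obtain rfl | hx := hx.eq_or_lt
    · simp only [bVW, Prod.mk.injEq] at hzero
      simp only [Prod.mk.injEq, true_and]
      linarith [hzero.2]
    · exact absurd (fR_eq_zero_of_bVW_eq_zero hx hzero) (h x hx)
  · rintro ⟨⟩
    simp [bVW]

theorem bare_state_below_Rc_general (Rc xc : ℝ)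
    (hxc : 0 < xc)
    (hroot : fR Rc xc = 0) (hderiv : deriv (fR Rc) xc = 0) :
    ∀ R : ℝ, 0 < R → R < Rc →
      (∀ x : ℝ, 0 < x → fR R x ≠ 0) ∧
      {p : ℝ × ℝ | 0 ≤ p.1 ∧ bVW R p = (0, 0)} = {((0 : ℝ), R)} := by
  intro R _ hR
  have hno_root : ∀ x : ℝ, 0 < x → fR R x ≠ 0 := fun x hx =>
    (fR_pos_of_double_root hxc.le hroot hderiv hR hx.le).ne'
  exact ⟨hno_root, bVW_zeros_eq_singleton hno_root⟩

/-- If R_c ∈ (1.42, 1.43) and x_c > 0 give a double root of f_{R_c}, then for 0 < R < R_c the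
cubic f_R has no positive roots, so the only equilibrium with x₁ ≥ 0 is the bare state
SN1 = (0, R). -/
theorem bare_state_below_Rc (Rc xc : ℝ)
    (hRc : Rc ∈ Set.Ioo (1.42 : ℝ) 1.43) (hxc : 0 < xc)
    (hroot : fR Rc xc = 0) (hderiv : deriv (fR Rc) xc = 0) :
    ∀ R : ℝ, 0 < R → R < Rc →
      (∀ x : ℝ, 0 < x → fR R x ≠ 0) ∧
      {p : ℝ × ℝ | 0 ≤ p.1 ∧ bVW R p = (0, 0)} = {((0 : ℝ), R)} :=
  bare_state_below_Rc_general Rc xc hxc hroot hderiv
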